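/- Let μ be a probability measure on Ω × U with first marginal ℚ and conditional kernel π̂(ω,z) = dμ(ω,z)/dℚ(ω). Suppose π̂(ω,z) = π(ω,z) exp(⟨θ,z⟩ − Λ) h(T_zω)/h(ω) for a positive function h, and suppose ℚ is π̂-invariant. Then the relative entropy H(μ) := ∫ ∑_{z∈U} π̂(ω,z) log(π̂(ω,z)/π(ω,z)) dℚ(ω) equals ⟨θ, ξ_μ⟩ − Λ, where ξ_μ := ∫ ∑_{z∈U} π̂(ω,z) z dℚ(ω). -/

import Mathlib

open MeasureTheory
open scoped RealInnerProductSpace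

/-!
Pointwise, `log (π̂ / π) = ⟨θ, z⟩ - Λ + log h(T_z ω) - log h(ω)`. Averaging against the
probability weights `π̂(ω, ·)` turns the first part into `⟨θ, ξ(ω)⟩ - Λ`, and the rest is the
coboundary `∑_z π̂(ω, z) log h(T_z ω) - log h(ω)`, whose `ℚ`-integral vanishes by
`π̂`-invariance of `ℚ`.
-/

theorem Real.log_div_eq_of_eq_mul_exp_mul_div {p q a b c : ℝ} (hq : 0 < q) (ha : 0 < a)
    (hb : 0 < b) (hp : p = q * Real.exp c * b / a) :
    Real.log (p / q) = c + Real.log b - Real.log a := by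
  have hpq : p / q = Real.exp c * (b / a) := by
    rw [hp]
    field_simp
  rw [hpq, Real.log_mul (Real.exp_ne_zero c) (div_pos hb ha).ne', Real.log_exp,
    Real.log_div hb.ne' ha.ne']
  ring

theorem Finset.sum_mul_log_div_eq_of_eq_mul_exp_mul_div {U : Type*} [Fintype U]
    {p q b c : U → ℝ} {a : ℝ} (hq : ∀ z, 0 < q z) (ha : 0 < a) (hb : ∀ z, 0 < b z)
    (hp : ∀ z, p z = q z * Real.exp (c z) * b z / a) (hsum : ∑ z, p z = 1) :
    ∑ z, p z * Real.log (p z / q z)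
      = ∑ z, p z * c z + (∑ z, p z * Real.log (b z) - Real.log a) := by
  simp_rw [Real.log_div_eq_of_eq_mul_exp_mul_div (hq _) ha (hb _) (hp _), mul_sub, mul_add,
    Finset.sum_sub_distrib, Finset.sum_add_distrib, ← Finset.sum_mul, hsum, one_mul]
  ring

theorem Finset.sum_mul_inner_sub_eq_of_sum_eq_one {U E : Type*} [Fintype U]
    [NormedAddCommGroup E] [InnerProductSpace ℝ E] {p : U → ℝ} (hsum : ∑ z, p z = 1)
    (θ : E) (v : U → E) (Λ : ℝ) :
    ∑ z, p z * (⟪θ, v z⟫ - Λ) = ⟪θ, ∑ z, p z • v z⟫ - Λ := by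
  simp_rw [inner_sum, real_inner_smul_right, mul_sub, Finset.sum_sub_distrib,
    ← Finset.sum_mul, hsum, one_mul]

theorem integral_sum_mul_comp_sub_eq_zero {Ω U : Type*} [MeasurableSpace Ω] [Fintype U]
    {Q : Measure Ω} {T : U → Ω → Ω} {p : Ω → U → ℝ}
    (hinv : ∀ g : Ω → ℝ, Integrable g Q → ∫ ω, ∑ z, p ω z * g (T z ω) ∂Q = ∫ ω, g ω ∂Q)
    {g : Ω → ℝ} (hg : Integrable g Q)
    (hcob : Integrable (fun ω => ∑ z, p ω z * g (T z ω) - g ω) Q) :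
    ∫ ω, (∑ z, p ω z * g (T z ω) - g ω) ∂Q = 0 := by
  have hsum : Integrable (fun ω => ∑ z, p ω z * g (T z ω)) Q := by
    exact (hcob.add hg).congr (.of_forall fun ω => sub_add_cancel _ _)
  rw [integral_sub hsum hg, hinv g hg, sub_self]

/-- If the kernel `π̂` is an h-transform of `π` and `Q` is `π̂`-invariant, then the
relative entropy `H(μ)` equals `⟨θ, ξ_μ⟩ - Λ`, where `ξ_μ` is the local drift. -/
theorem stmt14 {Ω U : Type*} [MeasurableSpace Ω] [Fintype U] {d : ℕ}
    (Q : Measure Ω) [IsProbabilityMeasure Q]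
    (T : U → Ω → Ω) (v : U → EuclideanSpace ℝ (Fin d))
    (θ : EuclideanSpace ℝ (Fin d)) (Λ : ℝ)
    (π πh : Ω → U → ℝ) (h : Ω → ℝ)
    (hpos : ∀ ω, 0 < h ω) (hπpos : ∀ ω z, 0 < π ω z)
    (hform : ∀ ω z, πh ω z = π ω z * Real.exp (⟪θ, v z⟫ - Λ) * h (T z ω) / h ω)
    (hker : ∀ᵐ ω ∂Q, ∑ z, πh ω z = 1)
    (hlogh : Integrable (fun ω => Real.log (h ω)) Q)
    (hinv : ∀ g : Ω → ℝ, Integrable g Q →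
      ∫ ω, ∑ z, πh ω z * g (T z ω) ∂Q = ∫ ω, g ω ∂Q)
    (hentint : Integrable (fun ω => ∑ z, πh ω z * Real.log (πh ω z / π ω z)) Q)
    (hdriftint : Integrable (fun ω => ∑ z, πh ω z • v z) Q) :
    ∫ ω, ∑ z, πh ω z * Real.log (πh ω z / π ω z) ∂Q
      = ⟪θ, ∫ ω, ∑ z, πh ω z • v z ∂Q⟫ - Λ := by
  set drift := fun ω => ⟪θ, ∑ z, πh ω z • v z⟫ - Λ
  set cob := fun ω => ∑ z, πh ω z * Real.log (h (T z ω)) - Real.log (h ω)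
  have hsplit : (fun ω => ∑ z, πh ω z * Real.log (πh ω z / π ω z)) =ᵐ[Q] drift + cob := by
    filter_upwards [hker] with ω hω
    rw [Finset.sum_mul_log_div_eq_of_eq_mul_exp_mul_div (hπpos ω) (hpos ω) (fun z => hpos _)
      (hform ω) hω, Finset.sum_mul_inner_sub_eq_of_sum_eq_one hω]
    rfl
  have hinner : Integrable (fun ω => ⟪θ, ∑ z, πh ω z • v z⟫) Q :=
    (innerSL ℝ θ).integrable_comp hdriftint
  have hdrift : Integrable drift Q := hinner.sub (integrable_const Λ)
  have hcob : Integrable cob Q := by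
    refine (hentint.sub hdrift).congr ?_
    filter_upwards [hsplit] with ω hω
    simp [hω]
  calc ∫ ω, ∑ z, πh ω z * Real.log (πh ω z / π ω z) ∂Q
      = ∫ ω, drift ω ∂Q + ∫ ω, cob ω ∂Q := by
        rw [integral_congr_ae hsplit, ← integral_add hdrift hcob]
        rfl
    _ = ⟪θ, ∫ ω, ∑ z, πh ω z • v z ∂Q⟫ - Λ := by
        rw [integral_sum_mul_comp_sub_eq_zero hinv hlogh hcob, add_zero,
          integral_sub hinner (integrable_const Λ), integral_inner hdriftint θ]
        simp
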